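/- arXiv:2305.01859 — 2 statements merged into one kernel-verified Lean document; each statement's English description precedes it below -/
import Mathlib

section
/- If {a >_lex b >_lex c} and {a >_lex c >_lex d} are both sorted subsets of V_{n,d}^α, then {a >_lex b >_lex c >_lex d} is a sorted subset (i.e., (b,d) is also a sorted pair). -/
/-- The set `V_{n,d}^α` of nonnegative integer tuples with coordinate sum `d`
and coordinatewise bound `α`. -/
def VT (n d : ℕ) (α : Fin n → ℕ) : Set (Fin n → ℕ) :=
  {c | (∑ i, c i) = d ∧ ∀ i, c i ≤ α i}

/-- `a >_lex b`: the leftmost nonzero entry of `a - b` is positive. -/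
def lexGT {n : ℕ} (a b : Fin n → ℕ) : Prop :=
  ∃ i : Fin n, (∀ j, j < i → a j = b j) ∧ b i < a i

/-- `sort(a,b) = (a,b)` for Sturmfels' sorting operator: for every `t`, the prefix
sum of `a` up to `t` equals the ceiling of half the prefix sum of `a + b`. -/
def sortedPair {n : ℕ} (a b : Fin n → ℕ) : Prop :=
  ∀ t : Fin n, 2 * (∑ i ∈ Finset.Iic t, a i)
    = (∑ i ∈ Finset.Iic t, (a i + b i)) + (∑ i ∈ Finset.Iic t, (a i + b i)) % 2

/-- The sorting signature set `Δ(a,b)` of a sorted pair, recorded (0-indexed) as the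
set of positions `t` where the prefix sum of `b` is one less than that of `a`. -/
def sigSet {n : ℕ} (a b : Fin n → ℕ) : Finset (Fin n) :=
  Finset.univ.filter (fun t => (∑ i ∈ Finset.Iic t, b i) + 1 = ∑ i ∈ Finset.Iic t, a i)

/-- Adjacency in the sorting graph `𝒢(d,α)`. -/
def adjG {n : ℕ} (a b : Fin n → ℕ) : Prop :=
  (lexGT a b ∧ sortedPair a b) ∨ (lexGT b a ∧ sortedPair b a)

/-- A clique of the sorting graph `𝒢(d,α)`. -/
def isClique (n d : ℕ) (α : Fin n → ℕ) (S : Finset (Fin n → ℕ)) : Prop :=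
  (↑S ⊆ VT n d α) ∧ ∀ a ∈ S, ∀ b ∈ S, a ≠ b → adjG a b

/-- A maximal clique of the sorting graph `𝒢(d,α)`. -/
def isMaxClique (n d : ℕ) (α : Fin n → ℕ) (S : Finset (Fin n → ℕ)) : Prop :=
  isClique n d α S ∧ ∀ T, isClique n d α T → S ⊆ T → S = T

open Finset

theorem lexGT_trans {n : ℕ} {a b c : Fin n → ℕ} (hab : lexGT a b) (hbc : lexGT b c) :
    lexGT a c := by
  obtain ⟨i, hi_eq, hi_lt⟩ := hab
  obtain ⟨j, hj_eq, hj_lt⟩ := hbc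
  rcases lt_trichotomy i j with hij | rfl | hji
  · exact ⟨i, fun k hk => (hi_eq k hk).trans (hj_eq k (hk.trans hij)), hj_eq i hij ▸ hi_lt⟩
  · exact ⟨i, fun k hk => (hi_eq k hk).trans (hj_eq k hk), hj_lt.trans hi_lt⟩
  · exact ⟨j, fun k hk => (hi_eq k (hk.trans hji)).trans (hj_eq k hk), hi_eq j hji ▸ hj_lt⟩

theorem sortedPair_iff {n : ℕ} {a b : Fin n → ℕ} :
    sortedPair a b ↔ ∀ t, ∑ i ∈ Iic t, b i ≤ ∑ i ∈ Iic t, a i ∧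
      ∑ i ∈ Iic t, a i ≤ ∑ i ∈ Iic t, b i + 1 := by
  simp only [sortedPair, sum_add_distrib]
  exact forall_congr' fun t => by omega

theorem stmt6_general (n : ℕ) (a b c e : Fin n → ℕ)
    (hbc : lexGT b c) (hce : lexGT c e)
    (sab : sortedPair a b) (sbc : sortedPair b c)
    (sce : sortedPair c e) (sae : sortedPair a e) :
    lexGT b e ∧ sortedPair b e := by
  refine ⟨lexGT_trans hbc hce, sortedPair_iff.2 fun t => ?_⟩
  -- The prefix sums up to `t` satisfy `E ≤ C ≤ B ≤ A ≤ E + 1`.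
  have hab' := sortedPair_iff.1 sab t
  have hbc' := sortedPair_iff.1 sbc t
  have hce' := sortedPair_iff.1 sce t
  have hae' := sortedPair_iff.1 sae t
  omega

/-- If `{a >_lex b >_lex c}` and `{a >_lex c >_lex e}` are sorted subsets of
`V_{n,d}^α`, then so is `{a >_lex b >_lex c >_lex e}`, i.e. `(b,e)` is also a
sorted pair. -/
theorem stmt6 (n d : ℕ) (α : Fin n → ℕ) (a b c e : Fin n → ℕ)
    (ha : a ∈ VT n d α) (hb : b ∈ VT n d α) (hc : c ∈ VT n d α) (he : e ∈ VT n d α)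
    (hab : lexGT a b) (hbc : lexGT b c) (hce : lexGT c e)
    (sab : sortedPair a b) (sbc : sortedPair b c) (sac : sortedPair a c)
    (sce : sortedPair c e) (sae : sortedPair a e) :
    lexGT b e ∧ sortedPair b e :=
  stmt6_general n a b c e hbc hce sab sbc sce sae
end

section
/- For any maximal clique {a^1 >_lex ⋯ >_lex a^n} of the sorting graph 𝒢(d,α), one has Δ(a^i, a^j) has length j − i for all 1 ≤ i < j ≤ n, and Δ(a^1, a^n) = [1,n); in particular a^n_1 = a^1_1 − 1, a^n_n = a^1_n + 1, and a^n_i = a^1_i for 2 ≤ i ≤ n−1. -/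
/-!
For a sorted pair `(a, b)` the prefix sums of `b` lie between those of `a` minus one and those
of `a`. Along a chain `a >_lex b >_lex c` of sorted pairs the prefix-sum gaps therefore add
without overlap, so `Δ(a, c) = Δ(a, b) ⊔ Δ(b, c)`; and lex-strictness makes every `Δ` nonempty.
Hence `|Δ(a^i, a^j)| ≥ j - i` along the clique. On the other hand all `a^i` have coordinate sum
`d`, so `Δ(a^1, a^n)` misses the last position and has at most `n - 1` elements. All these
inequalities are then equalities, and the coordinates of `a^n - a^1` are read off from the
prefix sums.
-/

open Finset

section SortedPairs

variable {n : ℕ}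

theorem lexGT.asymm {a b : Fin n → ℕ} (hab : lexGT a b) : ¬ lexGT b a := by
  rintro ⟨j, hj, hja⟩
  obtain ⟨i, hi, hib⟩ := hab
  rcases lt_trichotomy i j with h | rfl | h
  · have := hj i h; omega
  · omega
  · have := hi j h; omega

theorem lexGT.ne {a b : Fin n → ℕ} (hab : lexGT a b) : a ≠ b := by
  rintro rfl
  exact hab.asymm hab

theorem lexGT.exists_sum_Iic_lt {a b : Fin n → ℕ} (hab : lexGT a b) :
    ∃ t, ∑ i ∈ Iic t, b i < ∑ i ∈ Iic t, a i := by
  obtain ⟨t, hpre, ht⟩ := hab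
  refine ⟨t, ?_⟩
  have hIio : ∑ i ∈ Iio t, a i = ∑ i ∈ Iio t, b i :=
    sum_congr rfl fun i hi => hpre i (mem_Iio.mp hi)
  rw [Iic_eq_cons_Iio, sum_cons, sum_cons, hIio]
  omega

theorem sortedPair.sum_Iic_le {a b : Fin n → ℕ} (hab : sortedPair a b) (t : Fin n) :
    ∑ i ∈ Iic t, b i ≤ ∑ i ∈ Iic t, a i := by
  have := hab t
  rw [sum_add_distrib] at this
  omega

theorem sortedPair.sum_Iic_le_add_one {a b : Fin n → ℕ} (hab : sortedPair a b) (t : Fin n) :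
    ∑ i ∈ Iic t, a i ≤ ∑ i ∈ Iic t, b i + 1 := by
  have := hab t
  rw [sum_add_distrib] at this
  omega

theorem mem_sigSet {a b : Fin n → ℕ} {t : Fin n} :
    t ∈ sigSet a b ↔ ∑ i ∈ Iic t, b i + 1 = ∑ i ∈ Iic t, a i := by
  simp [sigSet]

theorem sigSet_self (a : Fin n → ℕ) : sigSet a a = ∅ := by
  ext t
  simp [mem_sigSet]

theorem sortedPair.sigSet_nonempty {a b : Fin n → ℕ} (hab : sortedPair a b) (hlex : lexGT a b) :
    (sigSet a b).Nonempty := by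
  obtain ⟨t, ht⟩ := hlex.exists_sum_Iic_lt
  have := hab.sum_Iic_le_add_one t
  exact ⟨t, mem_sigSet.mpr (by omega)⟩

theorem card_sigSet_add {a b c : Fin n → ℕ} (hab : sortedPair a b) (hbc : sortedPair b c)
    (hac : sortedPair a c) :
    #(sigSet a c) = #(sigSet a b) + #(sigSet b c) := by
  have key : ∀ t, (t ∈ sigSet a c ↔ t ∈ sigSet a b ∨ t ∈ sigSet b c) ∧
      ¬ (t ∈ sigSet a b ∧ t ∈ sigSet b c) := by
    intro t
    simp only [mem_sigSet]
    have := hab.sum_Iic_le t; have := hab.sum_Iic_le_add_one t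
    have := hbc.sum_Iic_le t; have := hbc.sum_Iic_le_add_one t
    have := hac.sum_Iic_le t; have := hac.sum_Iic_le_add_one t
    omega
  rw [← card_union_of_disjoint (disjoint_left.mpr fun t h₁ h₂ => (key t).2 ⟨h₁, h₂⟩)]
  congr 1
  ext t
  rw [mem_union, (key t).1]

theorem sum_Iic_of_val_eq_zero (x : Fin n → ℕ) {t : Fin n} (ht : t.1 = 0) :
    ∑ i ∈ Iic t, x i = x t := by
  have : Iic t = {t} := by
    ext i
    simp only [mem_Iic, mem_singleton, Fin.le_def, Fin.ext_iff]
    omega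
  rw [this, sum_singleton]

theorem sum_Iic_of_val_succ (x : Fin n → ℕ) {s t : Fin n} (hst : s.1 + 1 = t.1) :
    ∑ i ∈ Iic t, x i = ∑ i ∈ Iic s, x i + x t := by
  have : Iio t = Iic s := by
    ext i
    simp only [mem_Iio, mem_Iic, Fin.lt_def, Fin.le_def]
    omega
  rw [Iic_eq_cons_Iio, sum_cons, this, add_comm]

theorem sum_Iic_of_val_add_one_eq (x : Fin n → ℕ) {t : Fin n} (ht : t.1 + 1 = n) :
    ∑ i ∈ Iic t, x i = ∑ i, x i := by
  congr 1
  ext i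
  simp only [mem_Iic, mem_univ, iff_true, Fin.le_def]
  omega

theorem sigSet_subset_of_sum_eq {a b : Fin n → ℕ} (hsum : ∑ i, a i = ∑ i, b i) :
    sigSet a b ⊆ univ.filter (fun t : Fin n => t.1 + 1 < n) := by
  intro t ht
  rw [mem_sigSet] at ht
  simp only [mem_filter, mem_univ, true_and]
  by_contra hlast
  rw [sum_Iic_of_val_add_one_eq a (by omega), sum_Iic_of_val_add_one_eq b (by omega)] at ht
  omega

theorem card_filter_val_add_one_lt : #(univ.filter (fun t : Fin n => t.1 + 1 < n)) = n - 1 := by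
  rw [filter_congr (q := fun t : Fin n => t.1 < n - 1) (fun t _ => by omega),
    Fin.card_filter_val_lt]
  omega

end SortedPairs

section SortedChains

variable {m n : ℕ}

def IsSortedChain (A : Fin m → Fin n → ℕ) : Prop :=
  ∀ i j, i < j → lexGT (A i) (A j) ∧ sortedPair (A i) (A j)

theorem isClique.isSortedChain {d : ℕ} {α : Fin n → ℕ} {A : Fin m → Fin n → ℕ}
    (hS : isClique n d α (univ.image A)) (hlex : ∀ i j, i < j → lexGT (A i) (A j)) :
    IsSortedChain A := by
  intro i j hij
  refine ⟨hlex i j hij, ?_⟩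
  rcases hS.2 (A i) (by simp) (A j) (by simp) (hlex i j hij).ne with ⟨-, h⟩ | ⟨h, -⟩
  · exact h
  · exact absurd h (hlex i j hij).asymm

namespace IsSortedChain

variable {A : Fin m → Fin n → ℕ}

theorem card_sigSet_add (hA : IsSortedChain A) {i j k : Fin m} (hij : i ≤ j) (hjk : j ≤ k) :
    #(sigSet (A i) (A k)) = #(sigSet (A i) (A j)) + #(sigSet (A j) (A k)) := by
  rcases hij.eq_or_lt with rfl | hij
  · simp [sigSet_self]
  rcases hjk.eq_or_lt with rfl | hjk
  · simp [sigSet_self]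
  exact _root_.card_sigSet_add (hA i j hij).2 (hA j k hjk).2 (hA i k (hij.trans hjk)).2

theorem sub_le_card_sigSet (hA : IsSortedChain A) {i j : Fin m} (hij : i ≤ j) :
    j.1 - i.1 ≤ #(sigSet (A i) (A j)) := by
  obtain ⟨k, hk⟩ := Nat.exists_eq_add_of_le (Fin.le_def.mp hij)
  induction k generalizing j with
  | zero => omega
  | succ k ih =>
    let j' : Fin m := ⟨i.1 + k, by omega⟩
    have hj' : j'.1 = i.1 + k := rfl
    have hij' : i ≤ j' := Fin.le_def.mpr (Nat.le_add_right _ _)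
    have hj'j : j' < j := Fin.lt_def.mpr (by omega)
    have hstep := ((hA j' j hj'j).2.sigSet_nonempty (hA j' j hj'j).1).card_pos
    rw [hA.card_sigSet_add hij' hj'j.le]
    have := ih hij' rfl
    omega

theorem card_sigSet_eq_sub (hA : IsSortedChain A) (hm : 0 < m)
    (hends : #(sigSet (A ⟨0, hm⟩) (A ⟨m - 1, by omega⟩)) ≤ m - 1) {i j : Fin m} (hij : i ≤ j) :
    #(sigSet (A i) (A j)) = j.1 - i.1 := by
  have hi : (⟨0, hm⟩ : Fin m) ≤ i := Fin.le_def.mpr (Nat.zero_le _)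
  have hj : j ≤ ⟨m - 1, by omega⟩ := Fin.le_def.mpr (Nat.le_sub_one_of_lt j.isLt)
  rw [hA.card_sigSet_add hi (hij.trans hj), hA.card_sigSet_add hij hj] at hends
  have h₁ := hA.sub_le_card_sigSet hi
  have h₂ := hA.sub_le_card_sigSet hij
  have h₃ := hA.sub_le_card_sigSet hj
  simp only at h₁ h₃
  omega

end IsSortedChain

end SortedChains

section Coordinates

variable {n : ℕ} {a b : Fin n → ℕ}

theorem add_one_eq_of_mem_sigSet_of_val_eq_zero {t : Fin n} (ht : t.1 = 0)
    (hmem : t ∈ sigSet a b) : b t + 1 = a t := by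
  rwa [mem_sigSet, sum_Iic_of_val_eq_zero a ht, sum_Iic_of_val_eq_zero b ht] at hmem

theorem apply_eq_of_mem_sigSet {s t : Fin n} (hst : s.1 + 1 = t.1) (hs : s ∈ sigSet a b)
    (ht : t ∈ sigSet a b) : b t = a t := by
  rw [mem_sigSet] at hs ht
  rw [sum_Iic_of_val_succ a hst, sum_Iic_of_val_succ b hst] at ht
  omega

theorem apply_eq_add_one_of_mem_sigSet {s t : Fin n} (hst : s.1 + 1 = t.1) (ht : t.1 + 1 = n)
    (hs : s ∈ sigSet a b) (hsum : ∑ i, a i = ∑ i, b i) : b t = a t + 1 := by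
  rw [mem_sigSet] at hs
  rw [← sum_Iic_of_val_add_one_eq a ht, ← sum_Iic_of_val_add_one_eq b ht,
    sum_Iic_of_val_succ a hst, sum_Iic_of_val_succ b hst] at hsum
  omega

end Coordinates

/-- For any maximal clique `a^1 >_lex ⋯ >_lex a^n` of `𝒢(d,α)`:
`Δ(a^i,a^j)` has length `j - i` for `i < j`, `Δ(a^1,a^n) = [1,n)`, and in
particular `a^n_1 = a^1_1 - 1`, `a^n_n = a^1_n + 1`, `a^n_i = a^1_i` otherwise. -/
theorem stmt7 (n d : ℕ) (hn : 3 ≤ n) (α : Fin n → ℕ)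
    (A : Fin n → (Fin n → ℕ))
    (hdec : ∀ i j : Fin n, i < j → lexGT (A i) (A j))
    (hmax : isMaxClique n d α (Finset.image A Finset.univ)) :
    (∀ i j : Fin n, i < j → (sigSet (A i) (A j)).card = j.1 - i.1) ∧
    sigSet (A ⟨0, by omega⟩) (A ⟨n - 1, by omega⟩)
      = Finset.univ.filter (fun t : Fin n => t.1 + 1 < n) ∧
    A ⟨n - 1, by omega⟩ ⟨0, by omega⟩ + 1 = A ⟨0, by omega⟩ ⟨0, by omega⟩ ∧
    A ⟨n - 1, by omega⟩ ⟨n - 1, by omega⟩ = A ⟨0, by omega⟩ ⟨n - 1, by omega⟩ + 1 ∧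
    ∀ i : Fin n, 0 < i.1 → i.1 < n - 1 →
      A ⟨n - 1, by omega⟩ i = A ⟨0, by omega⟩ i := by
  have hA : IsSortedChain A := hmax.1.isSortedChain hdec
  have hsum : ∀ i, ∑ k, A i k = d := fun i => (hmax.1.1 (by simp)).1
  have hΔ : sigSet (A ⟨0, by omega⟩) (A ⟨n - 1, by omega⟩)
      = univ.filter (fun t : Fin n => t.1 + 1 < n) := by
    refine eq_of_subset_of_card_le (sigSet_subset_of_sum_eq ((hsum _).trans (hsum _).symm)) ?_
    rw [card_filter_val_add_one_lt]
    simpa using hA.sub_le_card_sigSet (i := ⟨0, by omega⟩) (j := ⟨n - 1, by omega⟩)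
      (Fin.le_def.mpr (Nat.zero_le _))
  have hmem : ∀ t : Fin n, t.1 + 1 < n → t ∈ sigSet (A ⟨0, by omega⟩) (A ⟨n - 1, by omega⟩) := by
    intro t ht
    simp [hΔ, ht]
  refine ⟨fun i j hij => hA.card_sigSet_eq_sub (by omega) ?_ hij.le, hΔ, ?_, ?_, ?_⟩
  · rw [hΔ, card_filter_val_add_one_lt]
  · exact add_one_eq_of_mem_sigSet_of_val_eq_zero rfl (hmem _ (by simp only; omega))
  · exact apply_eq_add_one_of_mem_sigSet (s := ⟨n - 2, by omega⟩) (by simp only; omega)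
      (by simp only; omega) (hmem _ (by simp only; omega)) ((hsum _).trans (hsum _).symm)
  · intro i h0 h1
    exact apply_eq_of_mem_sigSet (s := ⟨i.1 - 1, by omega⟩) (by simp only; omega)
      (hmem _ (by simp only; omega)) (hmem _ (by omega))
end
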